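/- arXiv:0905.2745 — 4 statements merged into one kernel-verified Lean document; each statement's English description precedes it below -/
import Mathlib

section
/- Let p ∈ L and n ≥ 0, where here ℂ[[z]][u]/(u^{n+1}) denotes truncated series whose coefficients in u are formal power series in z. If (a, b) with a, b ∈ ℂ[[z]][u]/(u^{n+1}) satisfies that zʲ·a + p·b and z⁻ʲ·b (formal Laurent-in-z series) have every occurring monomial zˢuʳ with s ≤ k·r, then a and b are polynomials in z (each u-degree part of a and b has only finitely many nonzero z-coefficients). Consequently the space of such pairs (a,b), which is H⁰(ℓ^(n); E^(n)) in the Čech description, is a finite-dimensional ℂ-vector space. -/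
noncomputable section

/-- `L = ℂ[z,z⁻¹][u]`: Laurent polynomials in `z` with polynomial coefficients in `u`,
realised as the algebra of finitely supported ℂ-linear combinations of monomials on the
exponent monoid `ℤ × ℕ`, where `(s, r)` is the exponent of the monomial `zˢuʳ`. -/
abbrev L : Type := AddMonoidAlgebra ℂ (ℤ × ℕ)

/-- The monomial `zˢ` (`s ∈ ℤ`). -/
def zp (s : ℤ) : L := AddMonoidAlgebra.single (s, 0) 1

/-- The monomial `u`. -/
def uu : L := AddMonoidAlgebra.single (0, 1) 1

/-- `f` is V-holomorphic: every monomial `zˢuʳ` occurring in `f` satisfies `s ≤ k·r`,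
i.e. `f` is holomorphic in the coordinates `(z⁻¹, zᵏu)` of the chart `V` of `Z_k`. -/
def VHol (k : ℕ) (f : L) : Prop := ∀ (s : ℤ) (r : ℕ), f.coeff (s, r) ≠ 0 → s ≤ (k : ℤ) * r

/-- `f` lies in `ℂ[z,u] ⊆ L`, i.e. is holomorphic on the chart `U`. -/
def MemPolyRing (f : L) : Prop := ∀ (s : ℤ) (r : ℕ), f.coeff (s, r) ≠ 0 → 0 ≤ s

/-- Formal series in the monomials `zˢuʳ` (`s ∈ ℤ`, `r ∈ ℕ`), as coefficient functions. -/
abbrev FS : Type := ℤ × ℕ → ℂ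

/-- The product of a Laurent polynomial `p ∈ L` with a formal series: for each monomial only
finitely many terms of `p` contribute, so the product is a well-defined formal series. -/
def mulL (p : L) (f : FS) : FS := fun m =>
  ∑ e ∈ Finsupp.support p.coeff, if e.2 ≤ m.2 then p.coeff e * f (m.1 - e.1, m.2 - e.2) else 0

/-- Multiplication of a formal series by `zᵗ` (`t ∈ ℤ`). -/
def shiftz (t : ℤ) (f : FS) : FS := fun m => f (m.1 - t, m.2)

/-- A formal series is V-holomorphic if every occurring monomial `zˢuʳ` satisfies `s ≤ k·r`. -/
def VHolF (k : ℕ) (f : FS) : Prop := ∀ (s : ℤ) (r : ℕ), f (s, r) ≠ 0 → s ≤ (k : ℤ) * r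

/-- A formal series lies in `ℂ[[z,u]]`: no negative powers of `z` occur. -/
def MemPS (f : FS) : Prop := ∀ (s : ℤ) (r : ℕ), s < 0 → f (s, r) = 0

/-- Truncation at u-degree `n`: representatives of `ℂ[[z]][u]/(u^{n+1})`. -/
def TruncAt (n : ℕ) (f : FS) : Prop := ∀ (s : ℤ) (r : ℕ), n < r → f (s, r) = 0

/-! A section `(a, b)` has `b` supported in `0 ≤ s ≤ k·n + j`, read off from `z⁻ʲ·b` being
V-holomorphic below u-degree `n`. Multiplying by the Laurent polynomial `p` raises the top
z-degree by at most the largest z-exponent `M` of `p`, so `zʲ·a = (zʲ·a + p·b) - p·b` is bounded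
as well. Hence all sections are supported in one finite box of monomials, and a space of
functions supported in a finite set is finite dimensional. -/

section VanishingOff

variable {K ι : Type*} [Field K]

def restrictPair (F : Set ι) : (ι → K) × (ι → K) →ₗ[K] (F → K) × (F → K) :=
  (LinearMap.funLeft K K Subtype.val).prodMap (LinearMap.funLeft K K Subtype.val)

theorem eq_zero_of_mem_ker_restrictPair_compl {F : Set ι} {x : (ι → K) × (ι → K)}
    (hx : x ∈ LinearMap.ker (restrictPair (K := K) Fᶜ)) {m : ι} (hm : m ∉ F) :
    x.1 m = 0 ∧ x.2 m = 0 := by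
  rw [LinearMap.mem_ker, Prod.ext_iff] at hx
  exact ⟨congrFun hx.1 ⟨m, hm⟩, congrFun hx.2 ⟨m, hm⟩⟩

theorem finiteDimensional_ker_restrictPair_compl {F : Set ι} (hF : F.Finite) :
    FiniteDimensional K (LinearMap.ker (restrictPair (K := K) Fᶜ)) := by
  have : Finite F := hF
  refine Module.Finite.of_injective ((restrictPair F).comp (LinearMap.ker _).subtype) ?_
  intro x y hxy
  rw [LinearMap.comp_apply, LinearMap.comp_apply, Prod.ext_iff] at hxy
  ext m <;> by_cases hm : m ∈ F
  · exact congrFun hxy.1 ⟨m, hm⟩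
  · rw [(eq_zero_of_mem_ker_restrictPair_compl x.2 hm).1,
      (eq_zero_of_mem_ker_restrictPair_compl y.2 hm).1]
  · exact congrFun hxy.2 ⟨m, hm⟩
  · rw [(eq_zero_of_mem_ker_restrictPair_compl x.2 hm).2,
      (eq_zero_of_mem_ker_restrictPair_compl y.2 hm).2]

theorem finiteDimensional_span_of_support_subset {F : Set ι} (hF : F.Finite)
    {S : Set ((ι → K) × (ι → K))}
    (hS : ∀ x ∈ S, Function.support x.1 ⊆ F ∧ Function.support x.2 ⊆ F) :
    FiniteDimensional K (Submodule.span K S) := by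
  have := finiteDimensional_ker_restrictPair_compl (K := K) hF
  refine Submodule.finiteDimensional_of_le (S₂ := LinearMap.ker (restrictPair (K := K) Fᶜ))
    (Submodule.span_le.2 fun x hx => ?_)
  rw [SetLike.mem_coe, LinearMap.mem_ker, Prod.ext_iff]
  refine ⟨funext fun m => ?_, funext fun m => ?_⟩
  · exact Function.notMem_support.1 fun h => m.2 ((hS x hx).1 h)
  · exact Function.notMem_support.1 fun h => m.2 ((hS x hx).2 h)

end VanishingOff

theorem finite_row_of_support_finite {f : FS} (hf : (Function.support f).Finite) (r : ℕ) :
    {s : ℤ | f (s, r) ≠ 0}.Finite :=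
  hf.preimage (Prod.mk_left_injective r).injOn

theorem MemPS.nonneg {f : FS} (hf : MemPS f) {s : ℤ} {r : ℕ} (h : f (s, r) ≠ 0) : 0 ≤ s :=
  not_lt.1 fun hs => h (hf s r hs)

theorem TruncAt.le {n : ℕ} {f : FS} (hf : TruncAt n f) {s : ℤ} {r : ℕ} (h : f (s, r) ≠ 0) :
    r ≤ n :=
  not_lt.1 fun hr => h (hf s r hr)

theorem VHolF.add_le_of_shiftz {k : ℕ} {t : ℤ} {f : FS} (hv : VHolF k (shiftz t f)) {s : ℤ}
    {r : ℕ} (h : f (s, r) ≠ 0) : s + t ≤ k * r :=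
  hv (s + t) r (by simpa [shiftz] using h)

theorem add_le_of_vHolF_shiftz_of_truncAt {k n : ℕ} {t : ℤ} {f : FS} (hn : TruncAt n f)
    (hv : VHolF k (shiftz t f)) {s : ℤ} {r : ℕ} (h : f (s, r) ≠ 0) : s + t ≤ k * n :=
  (hv.add_le_of_shiftz h).trans (mul_le_mul_of_nonneg_left (by exact_mod_cast hn.le h)
    (Int.natCast_nonneg k))

theorem mulL_apply_eq_zero_of_lt {p : L} {f : FS} {B M s : ℤ}
    (hp : ∀ e ∈ p.coeff.support, e.1 ≤ M) (hf : ∀ s r, f (s, r) ≠ 0 → s ≤ B) (hs : B + M < s)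
    (r : ℕ) : mulL p f (s, r) = 0 := by
  refine Finset.sum_eq_zero fun e he => ?_
  split_ifs
  · have : f (s - e.1, r - e.2) = 0 := by
      by_contra h
      linarith [hf _ _ h, hp e he]
    rw [this, mul_zero]
  · rfl

/-- The pairs `(a, b)` of the Čech description of `H⁰(ℓ⁽ⁿ⁾; E⁽ⁿ⁾)`. -/
def IsSection (k j n : ℕ) (p : L) (a b : FS) : Prop :=
  MemPS a ∧ MemPS b ∧ TruncAt n a ∧ TruncAt n b ∧
    VHolF k (shiftz (j : ℤ) a + mulL p b) ∧ VHolF k (shiftz (-(j : ℤ)) b)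

theorem IsSection.support_subset {k j n : ℕ} {p : L} {a b : FS} {M : ℤ}
    (h : IsSection k j n p a b) (hp : ∀ e ∈ p.coeff.support, e.1 ≤ M) (hM : 0 ≤ M) :
    Function.support a ⊆ Set.Icc 0 (k * n + j + M) ×ˢ Set.Iic n ∧
      Function.support b ⊆ Set.Icc 0 (k * n + j + M) ×ˢ Set.Iic n := by
  obtain ⟨ha, hb, hna, hnb, hva, hvb⟩ := h
  have hb_le : ∀ s r, b (s, r) ≠ 0 → s ≤ k * n + j := fun s r hs => by
    linarith [add_le_of_vHolF_shiftz_of_truncAt hnb hvb hs]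
  have ha_le : ∀ s r, a (s, r) ≠ 0 → s ≤ k * n + j + M := fun s r hs => by
    have hsum : (shiftz (j : ℤ) a + mulL p b) (s + j, r) = a (s, r) + mulL p b (s + j, r) := by
      simp [shiftz]
    by_cases hpb : mulL p b (s + j, r) = 0
    · have hsr := hva (s + j) r (by rw [hsum, hpb, add_zero]; exact hs)
      have hr : (k : ℤ) * r ≤ k * n :=
        mul_le_mul_of_nonneg_left (by exact_mod_cast hna.le hs) (Int.natCast_nonneg k)
      linarith
    · have hle := not_lt.1 fun hlt => hpb (mulL_apply_eq_zero_of_lt hp hb_le hlt r)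
      linarith
  constructor
  · rintro ⟨s, r⟩ hs
    exact ⟨⟨ha.nonneg hs, ha_le s r hs⟩, hna.le hs⟩
  · rintro ⟨s, r⟩ hs
    exact ⟨⟨hb.nonneg hs, by linarith [hb_le s r hs]⟩, hnb.le hs⟩

theorem sections_are_algebraic_and_finite_dimensional_general (k : ℕ) (j : ℕ)
    (p : L) (n : ℕ) :
    (∀ a b : FS, MemPS a → MemPS b → TruncAt n a → TruncAt n b →
      VHolF k (shiftz (j : ℤ) a + mulL p b) → VHolF k (shiftz (-(j : ℤ)) b) →
      (∀ r : ℕ, {s : ℤ | a (s, r) ≠ 0}.Finite) ∧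
      (∀ r : ℕ, {s : ℤ | b (s, r) ≠ 0}.Finite)) ∧
    FiniteDimensional ℂ (Submodule.span ℂ
      {x : FS × FS | MemPS x.1 ∧ MemPS x.2 ∧ TruncAt n x.1 ∧ TruncAt n x.2 ∧
        VHolF k (shiftz (j : ℤ) x.1 + mulL p x.2) ∧ VHolF k (shiftz (-(j : ℤ)) x.2)}) := by
  obtain ⟨M, hM⟩ := ((insert 0 (p.coeff.support.image Prod.fst)).bddAbove)
  have hM0 : 0 ≤ M := hM (Finset.mem_coe.2 (Finset.mem_insert_self _ _))
  have hp : ∀ e ∈ p.coeff.support, e.1 ≤ M := fun e he =>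
    hM (Finset.mem_coe.2 (Finset.mem_insert_of_mem (Finset.mem_image_of_mem _ he)))
  have hbox : (Set.Icc (0 : ℤ) (k * n + j + M) ×ˢ Set.Iic n).Finite :=
    (Set.finite_Icc _ _).prod (Set.finite_Iic _)
  refine ⟨fun a b ha hb hna hnb hva hvb => ?_,
    finiteDimensional_span_of_support_subset hbox fun x hx => IsSection.support_subset hx hp hM0⟩
  obtain ⟨hsa, hsb⟩ := IsSection.support_subset ⟨ha, hb, hna, hnb, hva, hvb⟩ hp hM0
  exact ⟨finite_row_of_support_finite (hbox.subset hsa),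
    finite_row_of_support_finite (hbox.subset hsb)⟩

/-- Let `p ∈ L` and `n ≥ 0`. If `a, b ∈ ℂ[[z]][u]/(u^{n+1})` are such that
`zʲ·a + p·b` and `z⁻ʲ·b` are V-holomorphic, then `a` and `b` are polynomials in `z` (each
u-degree part has finitely many nonzero z-coefficients); consequently the space
`H⁰(ℓ⁽ⁿ⁾; E⁽ⁿ⁾)` of all such pairs is a finite-dimensional ℂ-vector space. -/
theorem sections_are_algebraic_and_finite_dimensional (k : ℕ) (hk : 1 ≤ k) (j : ℕ)
    (p : L) (n : ℕ) :
    (∀ a b : FS, MemPS a → MemPS b → TruncAt n a → TruncAt n b →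
      VHolF k (shiftz (j : ℤ) a + mulL p b) → VHolF k (shiftz (-(j : ℤ)) b) →
      (∀ r : ℕ, {s : ℤ | a (s, r) ≠ 0}.Finite) ∧
      (∀ r : ℕ, {s : ℤ | b (s, r) ≠ 0}.Finite)) ∧
    FiniteDimensional ℂ (Submodule.span ℂ
      {x : FS × FS | MemPS x.1 ∧ MemPS x.2 ∧ TruncAt n x.1 ∧ TruncAt n x.2 ∧
        VHolF k (shiftz (j : ℤ) x.1 + mulL p x.2) ∧ VHolF k (shiftz (-(j : ℤ)) x.2)}) :=
  sections_are_algebraic_and_finite_dimensional_general k j p n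
end
end

section
/- Let j ≥ 0 and let L₃ = ℂ[z, z⁻¹][u₁, u₂] be the ring of Laurent polynomials in z with polynomial coefficients in u₁, u₂; call f ∈ L₃ V-holomorphic if every monomial zˢu₁ʳu₂ᵗ occurring in f satisfies s ≤ r + t (holomorphy in the coordinates (z⁻¹, zu₁, zu₂) of the second chart of W₁ = Tot(O_{ℙ¹}(−1) ⊕ O_{ℙ¹}(−1))). Suppose p ∈ L₃ has every monomial with u₁-degree plus u₂-degree at least 1, and let p̂ be obtained from p by deleting every monomial zˢu₁ʳu₂ᵗ that does not satisfy both 1 ≤ r + t ≤ 2j − 2 and r + t − j + 1 ≤ s ≤ j − 1. Then there exist a ∈ ℂ[z, u₁, u₂] and a V-holomorphic b ∈ L₃ with p − p̂ = zʲ·a + z⁻ʲ·b; i.e. every extension class of O(j) by O(−j) on W₁ has a canonical polynomial normal form supported on these monomials. -/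
noncomputable section

/-- `L₃ = ℂ[z,z⁻¹][u₁,u₂]`: Laurent polynomials in `z` with polynomial coefficients in
`u₁, u₂`, realised as the algebra of finitely supported ℂ-linear combinations of monomials
on the exponent monoid `ℤ × (ℕ × ℕ)`, where `(s, (r, t))` is the exponent of `zˢu₁ʳu₂ᵗ`. -/
abbrev L3 : Type := AddMonoidAlgebra ℂ (ℤ × (ℕ × ℕ))

/-- The monomial `zˢ` (`s ∈ ℤ`). -/
def zp3 (s : ℤ) : L3 := AddMonoidAlgebra.single (s, (0, 0)) 1

/-- `f` is V-holomorphic on `W₁ = Tot(O(−1) ⊕ O(−1))`: every monomial `zˢu₁ʳu₂ᵗ` occurring in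
`f` satisfies `s ≤ r + t`, i.e. `f` is holomorphic in the coordinates `(z⁻¹, zu₁, zu₂)`. -/
def VHol3 (f : L3) : Prop :=
  ∀ (s : ℤ) (r t : ℕ), f.coeff (s, (r, t)) ≠ 0 → s ≤ (r : ℤ) + t

/-- `f` lies in `ℂ[z,u₁,u₂] ⊆ L₃`, i.e. is holomorphic on the chart `U`. -/
def MemPolyRing3 (f : L3) : Prop := ∀ (s : ℤ) (r t : ℕ), f.coeff (s, (r, t)) ≠ 0 → 0 ≤ s

/-! Split `p − p̂` at `z`-degree `j`: its monomials with `s ≥ j` are `zʲ` times a polynomial, and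
those with `s < j` are `z⁻ʲ·b` with `b = zʲ·(p − p̂)_{s<j}`.  A monomial of `p − p̂` with `s < j`
lies outside the window, so either `r + t ≥ 2j − 1 ≥ s + j` or `s ≤ r + t − j`; either way
`s + j ≤ r + t`, which is the V-holomorphy of `b`. -/

lemma coeff_zp3_mul (k s : ℤ) (r t : ℕ) (f : L3) :
    (zp3 k * f).coeff (s, (r, t)) = f.coeff (s - k, (r, t)) := by
  have hsplit : ((s, (r, t)) : ℤ × (ℕ × ℕ)) = (k, (0, 0)) + (s - k, (r, t)) := by
    ext <;> simp
  rw [hsplit, zp3, AddMonoidAlgebra.coeff_single_mul_add, one_mul]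

lemma zp3_mul_zp3 (k l : ℤ) : zp3 k * zp3 l = zp3 (k + l) := by
  simp [zp3, AddMonoidAlgebra.single_mul_single]

lemma zp3_neg_mul_cancel (k : ℤ) (f : L3) : zp3 k * (zp3 (-k) * f) = f := by
  rw [← mul_assoc, zp3_mul_zp3, add_neg_cancel]
  exact one_mul f

lemma exists_eq_zp3_mul_add_zp3_neg_mul (k : ℤ) (f : L3) :
    ∃ a b : L3, MemPolyRing3 a ∧
      (∀ (s : ℤ) (r t : ℕ), b.coeff (s, (r, t)) ≠ 0 → s - k < k ∧ f.coeff (s - k, (r, t)) ≠ 0) ∧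
      f = zp3 k * a + zp3 (-k) * b := by
  set fHigh : L3 := .ofCoeff (f.coeff.filter fun m => k ≤ m.1)
  set fLow : L3 := .ofCoeff (f.coeff.filter fun m => ¬k ≤ m.1)
  refine ⟨zp3 (-k) * fHigh, zp3 k * fLow, fun s r t h => ?_, fun s r t h => ?_, ?_⟩
  · rw [coeff_zp3_mul] at h
    by_contra hs
    exact h (Finsupp.filter_apply_neg (fun m => k ≤ m.1) f.coeff (by simp only; omega))
  · rw [coeff_zp3_mul] at h
    by_cases hs : k ≤ s - k
    · exact absurd (Finsupp.filter_apply_neg (fun m => ¬k ≤ m.1) f.coeff (not_not.mpr hs)) h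
    · refine ⟨not_le.mp hs, ?_⟩
      rwa [Finsupp.filter_apply_pos (fun m => ¬k ≤ m.1) f.coeff (a := (s - k, (r, t))) hs] at h
  · have hLow : zp3 (-k) * (zp3 k * fLow) = fLow := by
      simpa using zp3_neg_mul_cancel (-k) fLow
    rw [zp3_neg_mul_cancel, hLow]
    exact congrArg AddMonoidAlgebra.ofCoeff (Finsupp.filter_add_filter_not f.coeff _).symm

lemma add_le_of_coeff_sub_ne_zero {j : ℕ} {p phat : L3}
    (hu : ∀ (s : ℤ) (r t : ℕ), p.coeff (s, (r, t)) ≠ 0 → 1 ≤ r + t)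
    (hphat : ∀ (s : ℤ) (r t : ℕ),
      phat.coeff (s, (r, t)) =
        if 1 ≤ r + t ∧ (r : ℤ) + t ≤ 2 * (j : ℤ) - 2 ∧
            (r : ℤ) + t - j + 1 ≤ s ∧ s ≤ (j : ℤ) - 1
        then p.coeff (s, (r, t)) else 0)
    {s : ℤ} {r t : ℕ} (hs : s < j) (h : (p - phat).coeff (s, (r, t)) ≠ 0) :
    s + j ≤ (r : ℤ) + t := by
  rw [AddMonoidAlgebra.coeff_sub, Finsupp.sub_apply, hphat] at h
  split_ifs at h with hwindow
  · exact absurd (sub_self _) h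
  · have := hu s r t (by simpa using h)
    omega

/-- On `W₁ = Tot(O_{ℙ¹}(−1) ⊕ O_{ℙ¹}(−1))`, let `p ∈ L₃` have every monomial
of total `u`-degree at least `1`, and let `p̂` be obtained from `p` by deleting every monomial
`zˢu₁ʳu₂ᵗ` not satisfying `1 ≤ r + t ≤ 2j − 2` and `r + t − j + 1 ≤ s ≤ j − 1`.  Then
`p − p̂ = zʲ·a + z⁻ʲ·b` with `a ∈ ℂ[z,u₁,u₂]` and `b` V-holomorphic: every extension class of
`O(j)` by `O(−j)` on `W₁` has a canonical polynomial normal form supported on these monomials. -/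
theorem canonical_normal_form_W1 (j : ℕ) (p phat : L3)
    (hu : ∀ (s : ℤ) (r t : ℕ), p.coeff (s, (r, t)) ≠ 0 → 1 ≤ r + t)
    (hphat : ∀ (s : ℤ) (r t : ℕ),
      phat.coeff (s, (r, t)) =
        if 1 ≤ r + t ∧ (r : ℤ) + t ≤ 2 * (j : ℤ) - 2 ∧
            (r : ℤ) + t - j + 1 ≤ s ∧ s ≤ (j : ℤ) - 1
        then p.coeff (s, (r, t)) else 0) :
    ∃ a b : L3, MemPolyRing3 a ∧ VHol3 b ∧ p - phat = zp3 j * a + zp3 (-(j : ℤ)) * b := by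
  obtain ⟨a, b, ha, hb, hsplit⟩ := exists_eq_zp3_mul_add_zp3_neg_mul j (p - phat)
  refine ⟨a, b, ha, fun s r t h => ?_, hsplit⟩
  obtain ⟨hlt, hne⟩ := hb s r t h
  have hle := add_le_of_coeff_sub_ne_zero hu hphat hlt hne
  omega
end
end

section
/- Let S = ℂ[x,y,w]/(x·w − y²), and let M be the S-module with generators β₀, β₁, β₂, γ and relations y·β₀ − x·β₁, w·β₀ − y·β₁, y·β₁ − x·β₂, w·β₁ − y·β₂ (i.e. M is the cokernel of the map S⁴ → S⁴ whose matrix has columns (y, −x, 0, 0), (w, −y, 0, 0), (0, y, −x, 0), (0, w, −y, 0)). Then the dual module M^∨ = Hom_S(M, S) is a free S-module of rank 2, generated by the functionals β^∨: β₀ ↦ x, β₁ ↦ y, β₂ ↦ w, γ ↦ 0 and γ^∨: βᵢ ↦ 0, γ ↦ 1. -/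
/-!
Over `R = ℂ[x,w]` the ring `S ≅ R[y]/(y² - xw)` is free with basis `1, y`. A functional `f` on `M`
is determined by `aᵢ = f(βᵢ)` and `f(γ)`, and the relations give `y a₀ = x a₁`, `y a₁ = x a₂`.
Writing `aᵢ = uᵢ + vᵢ y` and comparing coefficients gives `u₀ = x v₁`, `u₁ = w v₀ = x v₂`; since `x`
is prime in `R` and does not divide `w`, `v₀ = x t`, and then `(a₀, a₁, a₂) = s • (x, y, w)` with
`s = v₁ + t y`. So `f = s β^∨ + f(γ) γ^∨`; independence holds because `x` is a non-zero-divisor.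
-/

noncomputable section
set_option synthInstance.maxHeartbeats 1000000
set_option maxHeartbeats 1000000
open MvPolynomial

/-- `S = ℂ[x,y,w]/(x·w − y²)`, the coordinate ring of the quadric cone `X₂`
(here `x = X 0`, `y = X 1`, `w = X 2`). -/
abbrev S : Type :=
  MvPolynomial (Fin 3) ℂ ⧸
    Ideal.span {(X 0 * X 2 - X 1 ^ 2 : MvPolynomial (Fin 3) ℂ)}

def xx : S := Ideal.Quotient.mk _ (X 0)
def yy : S := Ideal.Quotient.mk _ (X 1)
def ww : S := Ideal.Quotient.mk _ (X 2)

/-- The presentation matrix of `M`: its columns are the relation vectors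
`(y, −x, 0, 0)`, `(w, −y, 0, 0)`, `(0, y, −x, 0)`, `(0, w, −y, 0)`. -/
def relMatrix : Matrix (Fin 4) (Fin 4) S :=
  !![yy, ww, 0, 0; -xx, -yy, yy, ww; 0, 0, -xx, -yy; 0, 0, 0, 0]

/-- The map `S⁴ → S⁴` given by the presentation matrix. -/
def relMap : (Fin 4 → S) →ₗ[S] (Fin 4 → S) := Matrix.toLin' relMatrix

/-- `M`: the `S`-module with generators `β₀, β₁, β₂, γ` and relations
`y·β₀ − x·β₁`, `w·β₀ − y·β₁`, `y·β₁ − x·β₂`, `w·β₁ − y·β₂`,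
i.e. the cokernel of `relMap`. -/
abbrev M : Type := (Fin 4 → S) ⧸ LinearMap.range relMap

/-- The generators `β₀, β₁, β₂, γ` of `M` (as `gen 0, …, gen 3`). -/
def gen : Fin 4 → M := fun i => Submodule.Quotient.mk (Pi.single i (1 : S))

namespace AdjoinRoot

section Quadratic

variable {R : Type*} [CommRing R] {g : Polynomial R}

theorem exists_eq_of_add_of_mul_root [Nontrivial R] (hg : g.Monic) (hdeg : g.degree = 2)
    (z : AdjoinRoot g) : ∃ a b : R, z = of g a + of g b * root g := by
  obtain ⟨f, rfl⟩ := mk_surjective z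
  set r := f %ₘ g
  have hmod : mk g r = mk g f := by
    simpa only [r, modByMonicHom_mk] using mk_leftInverse hg (mk g f)
  have hr := Polynomial.eq_X_add_C_of_degree_le_one
    (Order.le_of_lt_succ (hdeg ▸ Polynomial.degree_modByMonic_lt f hg : r.degree < 2))
  refine ⟨r.coeff 0, r.coeff 1, ?_⟩
  rw [← hmod]
  conv_lhs => rw [hr]
  simp only [map_add, map_mul, mk_C, mk_X]
  ring

variable [IsDomain R]

theorem of_add_of_mul_root_eq_zero_iff (hdeg : g.degree = 2) {a b : R} :
    of g a + of g b * root g = 0 ↔ a = 0 ∧ b = 0 := by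
  refine ⟨fun h => ?_, fun ⟨ha, hb⟩ => by simp [ha, hb]⟩
  rw [← mk_C, ← mk_C, ← mk_X, ← map_mul, ← map_add, mk_eq_zero] at h
  have h0 := Polynomial.eq_zero_of_dvd_of_degree_lt h (by rw [hdeg]; compute_degree!)
  exact ⟨by simpa using congr(Polynomial.coeff $h0 0), by simpa using congr(Polynomial.coeff $h0 1)⟩

theorem of_add_of_mul_root_inj (hdeg : g.degree = 2) {a b a' b' : R} :
    of g a + of g b * root g = of g a' + of g b' * root g ↔ a = a' ∧ b = b' := by
  rw [← sub_eq_zero, ← sub_eq_zero (a := a), ← sub_eq_zero (a := b),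
    ← of_add_of_mul_root_eq_zero_iff hdeg, map_sub, map_sub]
  ring_nf

theorem of_mul_eq_zero_iff (hg : g.Monic) (hdeg : g.degree = 2) {p : R} (hp : p ≠ 0)
    {z : AdjoinRoot g} : of g p * z = 0 ↔ z = 0 := by
  refine ⟨fun h => ?_, fun hz => by rw [hz, mul_zero]⟩
  obtain ⟨a, b, rfl⟩ := exists_eq_of_add_of_mul_root hg hdeg z
  obtain ⟨ha, hb⟩ := (of_add_of_mul_root_eq_zero_iff hdeg (a := p * a) (b := p * b)).mp (by
    rw [map_mul, map_mul]; linear_combination h)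
  simp [(mul_eq_zero.mp ha).resolve_left hp, (mul_eq_zero.mp hb).resolve_left hp]

end Quadratic

section SqrtProduct

variable {R : Type*} [CommRing R] {p q : R}

theorem root_sq_eq_of_mul_of : root (Polynomial.X ^ 2 - Polynomial.C (p * q)) ^ 2 =
    of _ p * of _ q := by
  rw [← sub_eq_zero, ← map_mul, ← mk_X, ← mk_C, ← map_pow, ← map_sub, mk_self]

theorem exists_eq_mul_of_root_mul_eq [IsDomain R] (hp : Prime p) (hpq : ¬ p ∣ q)
    {a₀ a₁ a₂ : AdjoinRoot (Polynomial.X ^ 2 - Polynomial.C (p * q))}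
    (h₀₁ : root _ * a₀ = of _ p * a₁) (h₁₂ : root _ * a₁ = of _ p * a₂) :
    ∃ s, a₀ = of _ p * s ∧ a₁ = root _ * s ∧ a₂ = of _ q * s := by
  have hg : (Polynomial.X ^ 2 - Polynomial.C (p * q)).Monic :=
    Polynomial.monic_X_pow_sub_C _ two_ne_zero
  have hdeg : (Polynomial.X ^ 2 - Polynomial.C (p * q)).degree = 2 :=
    Polynomial.degree_X_pow_sub_C two_pos _
  have hroot := root_sq_eq_of_mul_of (p := p) (q := q)
  obtain ⟨u₀, v₀, rfl⟩ := exists_eq_of_add_of_mul_root hg hdeg a₀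
  obtain ⟨u₁, v₁, rfl⟩ := exists_eq_of_add_of_mul_root hg hdeg a₁
  obtain ⟨u₂, v₂, rfl⟩ := exists_eq_of_add_of_mul_root hg hdeg a₂
  obtain ⟨hpv₀, hu₀⟩ := (of_add_of_mul_root_inj hdeg (a := p * q * v₀) (b := u₀)
    (a' := p * u₁) (b' := p * v₁)).mp
    (by simp only [map_mul]; linear_combination h₀₁ - of _ v₀ * hroot)
  obtain ⟨hpv₁, hu₁⟩ := (of_add_of_mul_root_inj hdeg (a := p * q * v₁) (b := u₁)
    (a' := p * u₂) (b' := p * v₂)).mp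
    (by simp only [map_mul]; linear_combination h₁₂ - of _ v₁ * hroot)
  have hqv₀ : u₁ = q * v₀ := mul_left_cancel₀ hp.ne_zero (by linear_combination -hpv₀)
  have hqv₁ : u₂ = q * v₁ := mul_left_cancel₀ hp.ne_zero (by linear_combination -hpv₁)
  obtain ⟨t, rfl⟩ : p ∣ v₀ := (hp.dvd_mul.mp ⟨v₂, by rw [← hqv₀, hu₁]⟩).resolve_left hpq
  have hv₂ : v₂ = q * t := mul_left_cancel₀ hp.ne_zero (by linear_combination -hu₁ + hqv₀)
  refine ⟨of _ v₁ + of _ t * root _, ?_, ?_, ?_⟩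
  · rw [hu₀]; simp only [map_mul]; ring
  · rw [hqv₀]; simp only [map_mul]; linear_combination -(of _ t) * hroot
  · rw [hqv₁, hv₂]; simp only [map_mul]; ring

end SqrtProduct

end AdjoinRoot

/-- `ℂ[x,y,w]` as polynomials in `y` over `ℂ[x,w]`, with `x, w` renamed `X 0, X 1`. -/
def polyInYEquiv : MvPolynomial (Fin 3) ℂ ≃ₐ[ℂ] Polynomial (MvPolynomial (Fin 2) ℂ) :=
  (renameEquiv ℂ (Equiv.swap 0 1)).trans (finSuccEquiv ℂ 2)

theorem polyInYEquiv_X_zero : polyInYEquiv (X 0) = Polynomial.C (X 0) := by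
  rw [polyInYEquiv, AlgEquiv.trans_apply, renameEquiv_apply, rename_X,
    show Equiv.swap (0 : Fin 3) 1 0 = Fin.succ 0 by decide, finSuccEquiv_X_succ]

theorem polyInYEquiv_X_one : polyInYEquiv (X 1) = Polynomial.X := by
  rw [polyInYEquiv, AlgEquiv.trans_apply, renameEquiv_apply, rename_X,
    show Equiv.swap (0 : Fin 3) 1 1 = 0 by decide, finSuccEquiv_X_zero]

theorem polyInYEquiv_X_two : polyInYEquiv (X 2) = Polynomial.C (X 1) := by
  rw [polyInYEquiv, AlgEquiv.trans_apply, renameEquiv_apply, rename_X,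
    show Equiv.swap (0 : Fin 3) 1 2 = Fin.succ 1 by decide, finSuccEquiv_X_succ]

def coneEquiv :
    S ≃+* AdjoinRoot (Polynomial.X ^ 2 - Polynomial.C (X 0 * X 1 : MvPolynomial (Fin 2) ℂ)) :=
  Ideal.quotientEquiv _ _ polyInYEquiv.toRingEquiv <| by
    rw [Ideal.map_span, Set.image_singleton, ← Ideal.span_singleton_neg]
    congr 2
    simp only [RingEquiv.coe_toRingHom, AlgEquiv.coe_ringEquiv,
      map_sub, map_mul, map_pow, polyInYEquiv_X_zero, polyInYEquiv_X_one, polyInYEquiv_X_two]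
    ring

theorem coneEquiv_mk (p : MvPolynomial (Fin 3) ℂ) :
    coneEquiv (Ideal.Quotient.mk _ p) = AdjoinRoot.mk _ (polyInYEquiv p) :=
  rfl

theorem coneEquiv_xx : coneEquiv xx = AdjoinRoot.of _ (X 0) := by
  rw [xx, coneEquiv_mk, polyInYEquiv_X_zero, AdjoinRoot.mk_C]

theorem coneEquiv_yy : coneEquiv yy = AdjoinRoot.root _ := by
  rw [yy, coneEquiv_mk, polyInYEquiv_X_one, AdjoinRoot.mk_X]

theorem coneEquiv_ww : coneEquiv ww = AdjoinRoot.of _ (X 1) := by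
  rw [ww, coneEquiv_mk, polyInYEquiv_X_two, AdjoinRoot.mk_C]

theorem xx_mul_ww : xx * ww = yy ^ 2 :=
  (Ideal.Quotient.mk_eq_mk_iff_sub_mem _ _).mpr (Ideal.subset_span rfl)

theorem eq_zero_of_xx_mul_eq_zero {s : S} (h : xx * s = 0) : s = 0 := by
  apply coneEquiv.injective
  rw [map_zero]
  refine (AdjoinRoot.of_mul_eq_zero_iff (Polynomial.monic_X_pow_sub_C _ two_ne_zero)
    (Polynomial.degree_X_pow_sub_C two_pos _) (X_ne_zero 0)).mp ?_
  rw [← coneEquiv_xx, ← map_mul, h, map_zero]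

theorem exists_eq_mul_of_yy_mul_eq {a₀ a₁ a₂ : S} (h₀₁ : yy * a₀ = xx * a₁)
    (h₁₂ : yy * a₁ = xx * a₂) : ∃ s, a₀ = xx * s ∧ a₁ = yy * s ∧ a₂ = ww * s := by
  obtain ⟨s, h₀, h₁, h₂⟩ := AdjoinRoot.exists_eq_mul_of_root_mul_eq X_prime
    (X_dvd_X.not.mpr (by decide)) (a₀ := coneEquiv a₀) (a₁ := coneEquiv a₁) (a₂ := coneEquiv a₂)
    (by rw [← coneEquiv_xx, ← coneEquiv_yy, ← map_mul, ← map_mul, h₀₁])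
    (by rw [← coneEquiv_xx, ← coneEquiv_yy, ← map_mul, ← map_mul, h₁₂])
  refine ⟨coneEquiv.symm s, ?_, ?_, ?_⟩ <;> apply coneEquiv.injective <;>
    simp only [map_mul, RingEquiv.apply_symm_apply, coneEquiv_xx, coneEquiv_yy, coneEquiv_ww, *]

theorem yy_smul_gen_zero : yy • gen 0 = xx • gen 1 :=
  (Submodule.Quotient.eq _).mpr ⟨Pi.single 0 1, by ext i; fin_cases i <;> simp [relMap, relMatrix]⟩

theorem yy_smul_gen_one : yy • gen 1 = xx • gen 2 :=
  (Submodule.Quotient.eq _).mpr ⟨Pi.single 2 1, by ext i; fin_cases i <;> simp [relMap, relMatrix]⟩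

def betaDual : Module.Dual S M :=
  (LinearMap.range relMap).liftQ (xx • .proj 0 + yy • .proj 1 + ww • .proj 2) <| by
    rintro _ ⟨v, rfl⟩
    simp only [relMap, relMatrix, Matrix.toLin'_apply, Matrix.cons_mulVec, dotProduct,
      Fin.sum_univ_four, Matrix.cons_val_zero, Matrix.cons_val_one, Matrix.cons_val, zero_mul,
      add_zero, zero_add, Matrix.empty_mulVec, LinearMap.mem_ker, LinearMap.add_apply,
      LinearMap.smul_apply, LinearMap.coe_proj, Function.eval, smul_eq_mul]
    linear_combination (v 1 - v 2) * xx_mul_ww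

def gammaDual : Module.Dual S M :=
  (LinearMap.range relMap).liftQ (.proj 3) <| by
    rintro _ ⟨v, rfl⟩
    simp [relMap, relMatrix]

@[simp] theorem betaDual_gen (i : Fin 4) : betaDual (gen i) = ![xx, yy, ww, 0] i := by
  fin_cases i <;> simp [betaDual, gen]

@[simp] theorem gammaDual_gen (i : Fin 4) : gammaDual (gen i) = ![0, 0, 0, 1] i := by
  fin_cases i <;> simp [gammaDual, gen]

theorem dual_ext_gen {f g : Module.Dual S M} (h : ∀ i, f (gen i) = g (gen i)) : f = g :=
  Submodule.linearMap_qext _ (LinearMap.pi_ext' fun i => LinearMap.ext_ring (h i))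

theorem linearIndependent_betaDual_gammaDual : LinearIndependent S ![betaDual, gammaDual] := by
  refine LinearIndependent.pair_iff.mpr fun s t hst => ⟨?_, ?_⟩
  · refine eq_zero_of_xx_mul_eq_zero ?_
    simpa [mul_comm] using congr($hst (gen 0))
  · simpa using congr($hst (gen 3))

theorem mem_span_betaDual_gammaDual (f : Module.Dual S M) :
    f ∈ Submodule.span S {betaDual, gammaDual} := by
  have h₀₁ : yy * f (gen 0) = xx * f (gen 1) := by
    rw [← smul_eq_mul, ← map_smul, yy_smul_gen_zero, map_smul, smul_eq_mul]
  have h₁₂ : yy * f (gen 1) = xx * f (gen 2) := by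
    rw [← smul_eq_mul, ← map_smul, yy_smul_gen_one, map_smul, smul_eq_mul]
  obtain ⟨s, h₀, h₁, h₂⟩ := exists_eq_mul_of_yy_mul_eq h₀₁ h₁₂
  refine Submodule.mem_span_pair.mpr ⟨s, f (gen 3), dual_ext_gen fun i => ?_⟩
  fin_cases i <;> simp [h₀, h₁, h₂, mul_comm]

/-- The dual module `M^∨ = Hom_S(M, S)` is free of rank `2`, with basis the
functionals `β^∨ : β₀ ↦ x, β₁ ↦ y, β₂ ↦ w, γ ↦ 0` and `γ^∨ : βᵢ ↦ 0, γ ↦ 1`. -/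
theorem dual_module_free_rank_two :
    ∃ φ ψ : Module.Dual S M,
      φ (gen 0) = xx ∧ φ (gen 1) = yy ∧ φ (gen 2) = ww ∧ φ (gen 3) = 0 ∧
      ψ (gen 0) = 0 ∧ ψ (gen 1) = 0 ∧ ψ (gen 2) = 0 ∧ ψ (gen 3) = 1 ∧
      ∃ B : Module.Basis (Fin 2) S (Module.Dual S M), B 0 = φ ∧ B 1 = ψ := by
  have hspan : ⊤ ≤ Submodule.span S (Set.range ![betaDual, gammaDual]) := fun f _ => by
    rw [Matrix.range_cons_cons_empty]
    exact mem_span_betaDual_gammaDual f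
  refine ⟨betaDual, gammaDual, by simp, by simp, by simp, by simp, by simp, by simp, by simp,
    by simp, Module.Basis.mk linearIndependent_betaDual_gammaDual hspan, by simp, by simp⟩
end
end

section
/- Let S = ℂ[x,y,w]/(x·w − y²), and let M be the S-module with generators β₀, β₁, β₂, γ and relations y·β₀ − x·β₁, w·β₀ − y·β₁, y·β₁ − x·β₂, w·β₁ − y·β₂ (i.e. M is the cokernel of the map S⁴ → S⁴ whose matrix has columns (y, −x, 0, 0), (w, −y, 0, 0), (0, y, −x, 0), (0, w, −y, 0)). Let ev : M → M^∨∨ = Hom_S(Hom_S(M,S), S) be the natural evaluation map, ev(m)(φ) = φ(m). Then the cokernel of ev is a 1-dimensional ℂ-vector space; i.e. the length of Q = M^∨∨/M is 1. -/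
noncomputable section
set_option synthInstance.maxHeartbeats 1000000
set_option maxHeartbeats 1000000
open MvPolynomial

/-!
Dividing by the monic polynomial `y² - x w` shows that `S` is free over `ℂ[x, w]` with basis
`1, y`. Comparing coefficients in this basis, the relations `y a = x b`, `y b = x c` force
`(a, b, c) = t (x, y, w)`. Hence `M^∨` is free on the functionals `φ = (x, y, w, 0)` and
`ψ = (0, 0, 0, 1)` (values on the generators), so `M^∨∨ ≅ S²` with `ev m = (φ m, ψ m)`, whose image
is `𝔪 ⊕ S` for `𝔪 = (x, y, w)`. The cokernel is therefore `S / 𝔪 ≅ ℂ`.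
-/

namespace Polynomial

variable {A : Type*} [CommRing A] [Nontrivial A] {g : A[X]}

theorem Monic.exists_dvd_sub_C_add_X_mul_C (hg : g.Monic) (hdeg : g.natDegree = 2)
    (p : A[X]) : ∃ a₀ a₁ : A, g ∣ p - (C a₀ + X * C a₁) := by
  have hr : (p %ₘ g).degree ≤ 1 := by
    have := degree_modByMonic_lt p hg
    rw [degree_eq_natDegree hg.ne_zero, hdeg] at this
    exact Order.le_of_lt_succ this
  refine ⟨(p %ₘ g).coeff 0, (p %ₘ g).coeff 1, p /ₘ g, ?_⟩
  linear_combination (eq_X_add_C_of_degree_le_one hr) - modByMonic_add_div p g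

theorem Monic.eq_zero_of_dvd_C_add_X_mul_C (hg : g.Monic) (hdeg : g.natDegree = 2)
    {a₀ a₁ : A} (h : g ∣ C a₀ + X * C a₁) : a₀ = 0 ∧ a₁ = 0 := by
  have hlt : (C a₀ + X * C a₁).degree < g.degree := by
    rw [degree_eq_natDegree hg.ne_zero, hdeg]
    compute_degree!
  have h0 : C a₀ + X * C a₁ = 0 := by
    rw [← (modByMonic_eq_self_iff hg).mpr hlt, (modByMonic_eq_zero_iff_dvd hg).mpr h]
  exact ⟨by simpa using congrArg (coeff · 0) h0, by simpa using congrArg (coeff · 1) h0⟩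

end Polynomial

/-- `ℂ[x, w]`, with `x = X 0` and `w = X 1`. -/
abbrev A2 : Type := MvPolynomial (Fin 2) ℂ

/-- Regards `ℂ[x, y, w]` as `ℂ[x, w][y]`. -/
def polyEquiv : MvPolynomial (Fin 3) ℂ ≃ₐ[ℂ] Polynomial A2 :=
  (renameEquiv ℂ (Equiv.swap 0 1)).trans (finSuccEquiv ℂ 2)

lemma polyEquiv_X_zero : polyEquiv (X 0) = Polynomial.C (X 0) := by
  simpa [polyEquiv, renameEquiv_apply] using finSuccEquiv_X_succ (R := ℂ) (j := (0 : Fin 2))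

lemma polyEquiv_X_one : polyEquiv (X 1) = Polynomial.X := by
  simpa [polyEquiv, renameEquiv_apply] using finSuccEquiv_X_zero (R := ℂ) (n := 2)

lemma polyEquiv_X_two : polyEquiv (X 2) = Polynomial.C (X 1) := by
  have : Equiv.swap (0 : Fin 3) 1 2 = 2 := by decide
  simpa [polyEquiv, renameEquiv_apply, this] using
    finSuccEquiv_X_succ (R := ℂ) (j := (1 : Fin 2))

def conePoly : Polynomial A2 := Polynomial.X ^ 2 - Polynomial.C (X 0 * X 1)

lemma conePoly_monic : conePoly.Monic := Polynomial.monic_X_pow_sub_C _ two_ne_zero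

lemma conePoly_natDegree : conePoly.natDegree = 2 :=
  Polynomial.natDegree_X_pow_sub_C

lemma polyEquiv_cone : polyEquiv (X 0 * X 2 - X 1 ^ 2) = -conePoly := by
  simp only [conePoly, map_sub, map_mul, map_pow, polyEquiv_X_zero, polyEquiv_X_one,
    polyEquiv_X_two]
  ring

def toS : Polynomial A2 →+* S := (Ideal.Quotient.mk _).comp polyEquiv.symm.toRingHom

lemma toS_surjective : Function.Surjective toS :=
  Ideal.Quotient.mk_surjective.comp polyEquiv.symm.surjective

lemma toS_eq_zero_iff (p : Polynomial A2) : toS p = 0 ↔ conePoly ∣ p := by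
  change Ideal.Quotient.mk _ (polyEquiv.symm p) = 0 ↔ _
  rw [Ideal.Quotient.eq_zero_iff_mem, Ideal.mem_span_singleton, ← map_dvd_iff polyEquiv,
    polyEquiv_cone, AlgEquiv.apply_symm_apply]
  exact neg_dvd

lemma toS_X : toS Polynomial.X = yy := by
  rw [← polyEquiv_X_one]
  simp [toS, yy]

def ι : A2 →+* S := toS.comp Polynomial.C

lemma ι_X_zero : ι (X 0) = xx := by
  rw [ι, RingHom.comp_apply, ← polyEquiv_X_zero]
  simp [toS, xx]

lemma ι_X_one : ι (X 1) = ww := by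
  rw [ι, RingHom.comp_apply, ← polyEquiv_X_two]
  simp [toS, ww]

lemma toS_C_add_X_mul_C (a₀ a₁ : A2) :
    toS (Polynomial.C a₀ + Polynomial.X * Polynomial.C a₁) = ι a₀ + yy * ι a₁ := by
  rw [map_add, map_mul, toS_X]
  rfl

theorem exists_eq_ι_add_yy_mul_ι (s : S) : ∃ a₀ a₁ : A2, s = ι a₀ + yy * ι a₁ := by
  obtain ⟨p, rfl⟩ := toS_surjective s
  obtain ⟨a₀, a₁, h⟩ := conePoly_monic.exists_dvd_sub_C_add_X_mul_C conePoly_natDegree p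
  refine ⟨a₀, a₁, ?_⟩
  rwa [← toS_C_add_X_mul_C, ← sub_eq_zero, ← map_sub, toS_eq_zero_iff]

theorem ι_add_yy_mul_ι_inj {a₀ a₁ b₀ b₁ : A2} :
    ι a₀ + yy * ι a₁ = ι b₀ + yy * ι b₁ ↔ a₀ = b₀ ∧ a₁ = b₁ := by
  refine ⟨fun h => ?_, fun ⟨h₀, h₁⟩ => h₀ ▸ h₁ ▸ rfl⟩
  have hdvd : conePoly ∣ Polynomial.C (a₀ - b₀) + Polynomial.X * Polynomial.C (a₁ - b₁) := by
    rw [← toS_eq_zero_iff, toS_C_add_X_mul_C, map_sub, map_sub]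
    linear_combination h
  have := conePoly_monic.eq_zero_of_dvd_C_add_X_mul_C conePoly_natDegree hdvd
  exact ⟨sub_eq_zero.mp this.1, sub_eq_zero.mp this.2⟩

lemma yy_mul_yy : yy * yy = ι (X 0 * X 1) := by
  have : toS conePoly = 0 := (toS_eq_zero_iff _).mpr dvd_rfl
  rw [conePoly, map_sub, map_pow, toS_X, sub_eq_zero] at this
  rw [← sq, this]
  rfl

lemma ι_mul_ι_add_yy_mul_ι (c a₀ a₁ : A2) :
    ι c * (ι a₀ + yy * ι a₁) = ι (c * a₀) + yy * ι (c * a₁) := by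
  simp only [map_mul]
  ring

lemma yy_mul_ι_add_yy_mul_ι (a₀ a₁ : A2) :
    yy * (ι a₀ + yy * ι a₁) = ι (X 0 * X 1 * a₁) + yy * ι a₀ := by
  rw [map_mul ι (X 0 * X 1), ← yy_mul_yy]
  ring

theorem exists_eq_mul_of_yy_mul_eq_xx_mul {a b c : S} (hab : yy * a = xx * b)
    (hbc : yy * b = xx * c) : ∃ t : S, a = xx * t ∧ b = yy * t ∧ c = ww * t := by
  obtain ⟨a₀, a₁, rfl⟩ := exists_eq_ι_add_yy_mul_ι a
  obtain ⟨b₀, b₁, rfl⟩ := exists_eq_ι_add_yy_mul_ι b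
  obtain ⟨c₀, c₁, rfl⟩ := exists_eq_ι_add_yy_mul_ι c
  rw [yy_mul_ι_add_yy_mul_ι, ← ι_X_zero, ι_mul_ι_add_yy_mul_ι, ι_add_yy_mul_ι_inj,
    mul_assoc, mul_right_inj' (X_ne_zero 0)] at hab hbc
  obtain ⟨rfl, rfl⟩ := hab
  obtain ⟨hc₀, hb₀⟩ := hbc
  obtain ⟨t₁, rfl⟩ : (X 0 : A2) ∣ a₁ :=
    (X_prime.dvd_or_dvd ⟨c₁, hb₀⟩).resolve_left (by simp [X_dvd_X])
  obtain rfl : c₁ = X 1 * t₁ := by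
    rw [← mul_right_inj' (X_ne_zero (0 : Fin 2)), ← hb₀]
    ring
  refine ⟨ι b₁ + yy * ι t₁, ?_, ?_, ?_⟩
  · rw [← ι_X_zero, ι_mul_ι_add_yy_mul_ι]
  · rw [yy_mul_ι_add_yy_mul_ι, add_comm]
    ring_nf
  · rw [← ι_X_one, ι_mul_ι_add_yy_mul_ι, ← hc₀]

section CokernelDual

open Matrix

variable {R : Type*} [CommRing R] {m n : Type*} [Fintype m] [DecidableEq m] [Fintype n]
  [DecidableEq n]

theorem Module.Dual.apply_mk_eq_dotProduct {N : Submodule R (m → R)}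
    (α : Module.Dual R ((m → R) ⧸ N)) (u : m → R) :
    α (Submodule.Quotient.mk u) =
      (fun i => α (Submodule.Quotient.mk (Pi.single i 1))) ⬝ᵥ u :=
  (LinearMap.congr_fun ((dotProductEquiv R m).apply_symm_apply (α ∘ₗ N.mkQ)) u).symm

theorem Module.Dual.ext_mk_single {N : Submodule R (m → R)}
    {α β : Module.Dual R ((m → R) ⧸ N)}
    (h : ∀ i, α (Submodule.Quotient.mk (Pi.single i 1)) =
      β (Submodule.Quotient.mk (Pi.single i 1))) : α = β := by
  ext i
  exact h i

def Matrix.cokerDual (A : Matrix m n R) (v : m → R) (hv : v ᵥ* A = 0) :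
    Module.Dual R ((m → R) ⧸ LinearMap.range A.toLin') :=
  (LinearMap.range A.toLin').liftQ (dotProductEquiv R m v) <| by
    rw [LinearMap.range_le_ker_iff]
    ext j
    simp only [LinearMap.comp_apply, LinearMap.zero_apply, toLin'_apply,
      dotProductEquiv_apply_apply, dotProduct_mulVec, hv, zero_dotProduct]

theorem Matrix.cokerDual_mk_single (A : Matrix m n R) (v : m → R) (hv : v ᵥ* A = 0) (i : m) :
    A.cokerDual v hv (Submodule.Quotient.mk (Pi.single i 1)) = v i := by
  simp [Matrix.cokerDual]

theorem Matrix.vecMul_eq_zero_of_dual (A : Matrix m n R)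
    (α : Module.Dual R ((m → R) ⧸ LinearMap.range A.toLin')) :
    (fun i => α (Submodule.Quotient.mk (Pi.single i 1))) ᵥ* A = 0 := by
  funext j
  calc _ = _ ⬝ᵥ (A *ᵥ Pi.single j 1) := by rw [dotProduct_mulVec, dotProduct_single_one]
    _ = α (Submodule.Quotient.mk (A *ᵥ Pi.single j 1)) := (α.apply_mk_eq_dotProduct _).symm
    _ = 0 := by
      rw [(Submodule.Quotient.mk_eq_zero _).mpr
        (LinearMap.mem_range.mpr ⟨Pi.single j 1, toLin'_apply _ _⟩), map_zero]

end CokernelDual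

open Matrix in
lemma xyw_vecMul_relMatrix : ![xx, yy, ww, 0] ᵥ* relMatrix = 0 := by
  have hxw : xx * ww = yy * yy := by rw [yy_mul_yy, map_mul, ι_X_zero, ι_X_one]
  ext j
  fin_cases j <;>
    simp [vecMul, dotProduct, Fin.sum_univ_four, relMatrix] <;> grind

open Matrix in
lemma single_three_vecMul_relMatrix : (Pi.single 3 1 : Fin 4 → S) ᵥ* relMatrix = 0 := by
  ext j
  fin_cases j <;> simp [vecMul, dotProduct, Fin.sum_univ_four, relMatrix]

def φ : Module.Dual S M := relMatrix.cokerDual _ xyw_vecMul_relMatrix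

def ψ : Module.Dual S M := relMatrix.cokerDual _ single_three_vecMul_relMatrix

lemma φ_gen (i : Fin 4) : φ (gen i) = ![xx, yy, ww, 0] i :=
  relMatrix.cokerDual_mk_single _ _ i

lemma ψ_gen (i : Fin 4) : ψ (gen i) = (Pi.single 3 1 : Fin 4 → S) i :=
  relMatrix.cokerDual_mk_single _ _ i

lemma dual_gen_relations (α : Module.Dual S M) :
    yy * α (gen 0) = xx * α (gen 1) ∧ yy * α (gen 1) = xx * α (gen 2) := by
  have h := relMatrix.vecMul_eq_zero_of_dual α
  have h₀ : ∑ i, α (gen i) * relMatrix i 0 = 0 := congrFun h 0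
  have h₂ : ∑ i, α (gen i) * relMatrix i 2 = 0 := congrFun h 2
  simp [Fin.sum_univ_four, relMatrix] at h₀ h₂
  exact ⟨by linear_combination h₀, by linear_combination h₂⟩

theorem exists_eq_smul_φ_add_smul_ψ (α : Module.Dual S M) :
    ∃ t : S, α = t • φ + α (gen 3) • ψ := by
  obtain ⟨h₀₁, h₁₂⟩ := dual_gen_relations α
  obtain ⟨t, h₀, h₁, h₂⟩ := exists_eq_mul_of_yy_mul_eq_xx_mul h₀₁ h₁₂
  refine ⟨t, Module.Dual.ext_mk_single fun i => ?_⟩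
  change α (gen i) = (t • φ + α (gen 3) • ψ) (gen i)
  fin_cases i <;> simp [φ_gen, ψ_gen, h₀, h₁, h₂, mul_comm]

theorem linearIndependent_φ_ψ : LinearIndependent S ![φ, ψ] := by
  refine LinearIndependent.pair_iff.mpr fun s t hst => ?_
  have h₀ := LinearMap.congr_fun hst (gen 0)
  have h₃ := LinearMap.congr_fun hst (gen 3)
  simp [φ_gen, ψ_gen] at h₀ h₃
  exact ⟨eq_zero_of_xx_mul_eq_zero (by rw [mul_comm, h₀]), h₃⟩

def dualBasis : Module.Basis (Fin 2) S (Module.Dual S M) :=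
  .mk linearIndependent_φ_ψ fun α _ => by
    obtain ⟨t, hα⟩ := exists_eq_smul_φ_add_smul_ψ α
    rw [hα]
    exact add_mem (Submodule.smul_mem _ _ (Submodule.subset_span ⟨0, rfl⟩))
      (Submodule.smul_mem _ _ (Submodule.subset_span ⟨1, rfl⟩))

lemma dualBasis_zero : dualBasis 0 = φ := by simp [dualBasis]

lemma dualBasis_one : dualBasis 1 = ψ := by simp [dualBasis]

def 𝔪 : Ideal S := Ideal.span {xx, yy, ww}

lemma xx_mem_𝔪 : xx ∈ 𝔪 := Ideal.subset_span (by simp)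

lemma yy_mem_𝔪 : yy ∈ 𝔪 := Ideal.subset_span (by simp)

lemma ww_mem_𝔪 : ww ∈ 𝔪 := Ideal.subset_span (by simp)

lemma φ_mem_𝔪 (m : M) : φ m ∈ 𝔪 := by
  obtain ⟨u, rfl⟩ := Submodule.Quotient.mk_surjective _ m
  rw [φ.apply_mk_eq_dotProduct]
  refine Ideal.sum_mem _ fun i _ => Ideal.mul_mem_right _ _ ?_
  change φ (gen i) ∈ 𝔪
  fin_cases i <;> simp [φ_gen, xx_mem_𝔪, yy_mem_𝔪, ww_mem_𝔪]

lemma 𝔪_le_map_ker_ψ : (𝔪 : Submodule S S) ≤ (LinearMap.ker ψ).map φ := by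
  refine Submodule.span_le.mpr ?_
  rintro _ (rfl | rfl | rfl)
  exacts [⟨gen 0, by simp [ψ_gen], by simp [φ_gen]⟩, ⟨gen 1, by simp [ψ_gen], by simp [φ_gen]⟩,
    ⟨gen 2, by simp [ψ_gen], by simp [φ_gen]⟩]

def evalφMod𝔪 : Module.Dual S (Module.Dual S M) →ₗ[S] S ⧸ 𝔪 :=
  𝔪.mkQ ∘ₗ LinearMap.applyₗ φ

lemma evalφMod𝔪_surjective : Function.Surjective evalφMod𝔪 := by
  intro z
  obtain ⟨s, rfl⟩ := Submodule.mkQ_surjective _ z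
  have hφ : dualBasis.coord 0 φ = 1 := by
    rw [← dualBasis_zero, Module.Basis.coord_apply, Module.Basis.repr_self, Finsupp.single_eq_same]
  refine ⟨s • dualBasis.coord 0, ?_⟩
  simp only [evalφMod𝔪, LinearMap.comp_apply, LinearMap.applyₗ_apply_apply, LinearMap.smul_apply,
    hφ, smul_eq_mul, mul_one]

lemma ker_evalφMod𝔪 : LinearMap.ker evalφMod𝔪 = LinearMap.range (Module.Dual.eval S M) := by
  ext Ξ
  simp only [LinearMap.mem_ker, evalφMod𝔪, LinearMap.comp_apply, LinearMap.applyₗ_apply_apply,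
    Submodule.mkQ_apply, Submodule.Quotient.mk_eq_zero, LinearMap.mem_range]
  constructor
  · intro hΞ
    obtain ⟨m₀, hψ, hφ⟩ := 𝔪_le_map_ker_ψ hΞ
    refine ⟨m₀ + Ξ ψ • gen 3, dualBasis.ext fun i => ?_⟩
    fin_cases i <;> simp_all [dualBasis_zero, dualBasis_one, φ_gen, ψ_gen]
  · rintro ⟨m, rfl⟩
    exact φ_mem_𝔪 m

def cokerEvalEquiv :
    (Module.Dual S (Module.Dual S M) ⧸ LinearMap.range (Module.Dual.eval S M)) ≃ₗ[S] S ⧸ 𝔪 :=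
  (Submodule.quotEquivOfEq _ _ ker_evalφMod𝔪.symm).trans
    (evalφMod𝔪.quotKerEquivOfSurjective evalφMod𝔪_surjective)

def evalVertex : S →ₐ[ℂ] ℂ :=
  Ideal.Quotient.liftₐ _ (aeval 0) fun F hF => by
    obtain ⟨G, rfl⟩ := Ideal.mem_span_singleton'.mp hF
    simp

lemma ker_evalVertex : RingHom.ker evalVertex = 𝔪 := by
  refine le_antisymm (fun s hs => ?_) (Ideal.span_le.mpr ?_)
  · obtain ⟨F, rfl⟩ := Ideal.Quotient.mk_surjective s
    have hF : F ∈ idealOfVars (Fin 3) ℂ := by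
      rw [← pow_one (idealOfVars _ _), mem_pow_idealOfVars_iff']
      intro d hd
      obtain rfl : d = 0 := by simpa [Finsupp.degree_eq_zero_iff] using hd
      simpa [evalVertex, ← constantCoeff_eq] using hs
    refine Ideal.map_le_of_le_comap ?_ (Ideal.mem_map_of_mem _ hF)
    rw [idealOfVars, Ideal.span_le]
    rintro _ ⟨i, rfl⟩
    fin_cases i
    exacts [xx_mem_𝔪, yy_mem_𝔪, ww_mem_𝔪]
  · rintro _ (rfl | rfl | rfl) <;> simp [evalVertex, xx, yy, ww]

lemma rank_quotient_𝔪 : Module.rank ℂ (S ⧸ 𝔪) = 1 := by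
  rw [← ker_evalVertex, (Ideal.quotientKerAlgEquivOfSurjective (f := evalVertex)
    fun c => ⟨algebraMap ℂ S c, evalVertex.commutes c⟩).toLinearEquiv.rank_eq, Module.rank_self]

/-- The cokernel of the evaluation map `ev : M → M^∨∨` is a 1-dimensional
ℂ-vector space: the length of `Q = M^∨∨/M` is `1`. -/
theorem coker_eval_one_dimensional :
    Module.rank ℂ
      (Module.Dual S (Module.Dual S M) ⧸ LinearMap.range (Module.Dual.eval S M)) = 1 := by
  rw [(cokerEvalEquiv.restrictScalars ℂ).rank_eq, rank_quotient_𝔪]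
end
end
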